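/- Let Γ = A *_C B and let γ ∈ Γ be cyclically reduced. If γ is conjugate in Γ to an element γ' lying in one of the factors A or B, and γ is not conjugate in Γ to any element of C, then γ and γ' lie in the same factor and are conjugate by an element of that factor. -/

import Mathlib

/-!
Internal characterization of the amalgamated free product `Γ = A *_C B`:
`A` and `B` are subgroups of `Γ` generating `Γ`, the amalgamated subgroup is
`C = A ⊓ B`, and (normal form theorem) the product of any nonempty reduced
sequence is nontrivial.
-/

variable {Γ : Type*} [Group Γ]

/-- `x` and `y` lie in different factors among `A`, `B`. -/
def DiffFactors (A B : Subgroup Γ) (x y : Γ) : Prop :=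
  ¬(x ∈ A ∧ y ∈ A) ∧ ¬(x ∈ B ∧ y ∈ B)

/-- A reduced sequence: every entry lies in `(A ∪ B) \ (A ⊓ B)` and consecutive
entries lie in different factors. -/
def ReducedSeq (A B : Subgroup Γ) (l : List Γ) : Prop :=
  (∀ g ∈ l, (g ∈ A ∨ g ∈ B) ∧ ¬(g ∈ A ∧ g ∈ B)) ∧ l.Chain' (DiffFactors A B)

/-- `Γ` is the amalgamated free product of its subgroups `A` and `B`
along `C = A ⊓ B`. -/
def IsAmalgam (A B : Subgroup Γ) : Prop :=
  A ⊔ B = ⊤ ∧ ∀ l : List Γ, ReducedSeq A B l → l ≠ [] → l.prod ≠ 1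

/-- `g` is cyclically reduced: it has length 1 (it lies in a factor), or it has
a reduced form of length `≥ 2` whose first and last entries lie in different
factors. -/
def AmCyclicallyReduced (A B : Subgroup Γ) (g : Γ) : Prop :=
  (g ∈ A ∨ g ∈ B) ∨
    ∃ l : List Γ, ReducedSeq A B l ∧ l.prod = g ∧ 2 ≤ l.length ∧
      ∃ x y, l.head? = some x ∧ l.getLast? = some y ∧ DiffFactors A B x y

/-!
Write the conjugator as a reduced word `m` and peel off its last syllable `x`. If `x` lies in the
factor of `γ'`, replace `γ'` by `x γ' x⁻¹`, which stays outside `C` because `γ` is not conjugate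
into `C`. Otherwise the word `m γ' m⁻¹` is reduced, has length at least 3, and its end syllables
`d`, `d⁻¹` lie in one factor. The normal form theorem forces two reduced words with the same
product to have end syllables agreeing up to `C` (they must cancel in `u⁻¹ w = 1`), so `γ` would
have no reduced form with end syllables in different factors and would lie in no factor: it
would not be cyclically reduced.
-/

section Amalgam

variable {A B : Subgroup Γ} {x y z c : Γ}

def SameFactor (A B : Subgroup Γ) (x y : Γ) : Prop :=
  (x ∈ A ∧ y ∈ A) ∨ (x ∈ B ∧ y ∈ B)

def IsSyllable (A B : Subgroup Γ) (g : Γ) : Prop :=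
  (g ∈ A ∨ g ∈ B) ∧ ¬(g ∈ A ∧ g ∈ B)

theorem not_sameFactor : ¬SameFactor A B x y ↔ DiffFactors A B x y := not_or

theorem DiffFactors.symm (h : DiffFactors A B x y) : DiffFactors A B y x :=
  ⟨fun ⟨hy, hx⟩ => h.1 ⟨hx, hy⟩, fun ⟨hy, hx⟩ => h.2 ⟨hx, hy⟩⟩

@[simp] theorem diffFactors_inv_left : DiffFactors A B x⁻¹ y ↔ DiffFactors A B x y := by
  simp [DiffFactors]

@[simp] theorem diffFactors_inv_right : DiffFactors A B x y⁻¹ ↔ DiffFactors A B x y := by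
  simp [DiffFactors]

theorem DiffFactors.of_sameFactor_left (h : DiffFactors A B x z) (hyx : SameFactor A B y x)
    (hy : IsSyllable A B y) : DiffFactors A B y z := by
  unfold DiffFactors SameFactor IsSyllable at *
  tauto

theorem DiffFactors.of_sameFactor_right (h : DiffFactors A B z x) (hyx : SameFactor A B y x)
    (hy : IsSyllable A B y) : DiffFactors A B z y :=
  (h.symm.of_sameFactor_left hyx hy).symm

theorem SameFactor.symm (h : SameFactor A B x y) : SameFactor A B y x :=
  h.imp And.symm And.symm

theorem SameFactor.mul_sameFactor_left (h : SameFactor A B x y) : SameFactor A B (x * y) x :=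
  h.imp (fun ⟨hx, hy⟩ => ⟨mul_mem hx hy, hx⟩) (fun ⟨hx, hy⟩ => ⟨mul_mem hx hy, hx⟩)

theorem SameFactor.mul_sameFactor_right (h : SameFactor A B x y) : SameFactor A B (x * y) y :=
  h.imp (fun ⟨hx, hy⟩ => ⟨mul_mem hx hy, hy⟩) (fun ⟨hx, hy⟩ => ⟨mul_mem hx hy, hy⟩)

theorem sameFactor_of_mem_inf (hc : c ∈ A ⊓ B) (hy : y ∈ A ∨ y ∈ B) :
    SameFactor A B c y :=
  hy.imp (⟨hc.1, ·⟩) (⟨hc.2, ·⟩)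

theorem sameFactor_inv_right (hx : x ∈ A ∨ x ∈ B) : SameFactor A B x x⁻¹ :=
  hx.imp (fun h => ⟨h, inv_mem h⟩) (fun h => ⟨h, inv_mem h⟩)

theorem SameFactor.mem_left (h : SameFactor A B x y) : x ∈ A ∨ x ∈ B :=
  h.imp And.left And.left

theorem IsSyllable.of_sameFactor (h : SameFactor A B x y) (hx : x ∉ A ⊓ B) :
    IsSyllable A B x :=
  ⟨h.mem_left, hx⟩

@[simp] theorem isSyllable_inv : IsSyllable A B x⁻¹ ↔ IsSyllable A B x := by
  simp [IsSyllable]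

theorem IsSyllable.mem_inf_mul (hy : IsSyllable A B y) (hc : c ∈ A ⊓ B) :
    IsSyllable A B (c * y) ∧ SameFactor A B (c * y) y := by
  have hcy := (sameFactor_of_mem_inf hc hy.1).mul_sameFactor_right
  refine ⟨.of_sameFactor hcy fun h => hy.2 ?_, hcy⟩
  simpa using mul_mem (inv_mem hc) h

theorem reducedSeq_iff {l : List Γ} :
    ReducedSeq A B l ↔ (∀ g ∈ l, IsSyllable A B g) ∧ l.IsChain (DiffFactors A B) :=
  Iff.rfl

theorem reducedSeq_singleton : ReducedSeq A B [x] ↔ IsSyllable A B x := by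
  simp [reducedSeq_iff]

theorem reducedSeq_append {l₁ l₂ : List Γ} :
    ReducedSeq A B (l₁ ++ l₂) ↔ ReducedSeq A B l₁ ∧ ReducedSeq A B l₂ ∧
      ∀ x ∈ l₁.getLast?, ∀ y ∈ l₂.head?, DiffFactors A B x y := by
  simp only [reducedSeq_iff, List.mem_append, List.isChain_append]
  grind

theorem reducedSeq_cons {l : List Γ} :
    ReducedSeq A B (x :: l) ↔
      IsSyllable A B x ∧ ReducedSeq A B l ∧ ∀ y ∈ l.head?, DiffFactors A B x y := by
  rw [← List.singleton_append, reducedSeq_append, reducedSeq_singleton]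
  simp

theorem ReducedSeq.cons_of_sameFactor {l : List Γ} (h : ReducedSeq A B (y :: l))
    (hx : IsSyllable A B x) (hxy : SameFactor A B x y) : ReducedSeq A B (x :: l) := by
  obtain ⟨-, hl, hyl⟩ := reducedSeq_cons.mp h
  exact reducedSeq_cons.mpr ⟨hx, hl, fun z hz => (hyl z hz).of_sameFactor_left hxy hx⟩

def List.invReverse (l : List Γ) : List Γ :=
  (l.map (·⁻¹)).reverse

@[simp] theorem List.prod_invReverse (l : List Γ) : l.invReverse.prod = l.prod⁻¹ :=
  (l.prod_inv_reverse).symm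

@[simp] theorem List.head?_invReverse (l : List Γ) :
    l.invReverse.head? = l.getLast?.map (·⁻¹) := by
  simp [List.invReverse, List.head?_reverse, List.getLast?_map]

@[simp] theorem List.getLast?_invReverse (l : List Γ) :
    l.invReverse.getLast? = l.head?.map (·⁻¹) := by
  simp [List.invReverse, List.getLast?_reverse, List.head?_map]

theorem ReducedSeq.invReverse {l : List Γ} (h : ReducedSeq A B l) :
    ReducedSeq A B l.invReverse := by
  refine reducedSeq_iff.mpr ⟨fun g hg => ?_, ?_⟩
  · simp only [List.invReverse, List.mem_reverse] at hg
    obtain ⟨a, ha, rfl⟩ := List.mem_map.mp hg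
    exact isSyllable_inv.mpr (h.1 a ha)
  · simp only [List.invReverse, List.isChain_reverse, List.isChain_map]
    exact h.2.imp fun _ _ hab => by simpa using hab.symm


theorem ReducedSeq.append_cons_invReverse {m : List Γ} {g : Γ} (hm : ReducedSeq A B m)
    (hx : m.getLast? = some x) (hg : IsSyllable A B g) (hxg : DiffFactors A B x g) :
    ReducedSeq A B (m ++ g :: m.invReverse) := by
  refine reducedSeq_append.mpr ⟨hm, reducedSeq_cons.mpr ⟨hg, hm.invReverse, ?_⟩, ?_⟩
  · simpa [hx] using hxg.symm
  · simpa [hx] using hxg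

theorem exists_reducedSeq_mul_prod {l : List Γ} (hx : x ∈ A ∨ x ∈ B)
    (hl : ReducedSeq A B l) :
    (x * l.prod ∈ A ⊓ B ∧ l.length ≤ 1) ∨
      ∃ l', ReducedSeq A B l' ∧ l'.prod = x * l.prod ∧ l.length ≤ l'.length + 1 := by
  rcases l with _ | ⟨y, l⟩
  · by_cases hxC : x ∈ A ⊓ B
    · exact .inl ⟨by simpa using hxC, by simp⟩
    · exact .inr ⟨[x], reducedSeq_singleton.mpr ⟨hx, hxC⟩, by simp, by simp⟩
  obtain ⟨hy, hl', -⟩ := reducedSeq_cons.mp hl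
  by_cases hxy : SameFactor A B x y
  swap
  · have hxC : x ∉ A ⊓ B := fun hxC => hxy (sameFactor_of_mem_inf hxC hy.1)
    refine .inr ⟨x :: y :: l, reducedSeq_cons.mpr ⟨⟨hx, hxC⟩, hl, ?_⟩, by simp, by simp⟩
    simpa using not_sameFactor.mp hxy
  by_cases hC : x * y ∈ A ⊓ B
  · rcases l with _ | ⟨z, l⟩
    · exact .inl ⟨by simpa using hC, by simp⟩
    · obtain ⟨hxyz, hxyz_z⟩ := (reducedSeq_cons.mp hl').1.mem_inf_mul hC
      exact .inr ⟨x * y * z :: l, hl'.cons_of_sameFactor hxyz hxyz_z, by simp [mul_assoc],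
        by simp⟩
  · exact .inr ⟨x * y :: l, hl.cons_of_sameFactor (.of_sameFactor hxy.mul_sameFactor_right hC)
      hxy.mul_sameFactor_right, by simp [mul_assoc], by simp⟩

theorem mem_inf_or_exists_reducedSeq_mul (hx : x ∈ A ∨ x ∈ B)
    (hy : y ∈ A ⊓ B ∨ ∃ l, ReducedSeq A B l ∧ l.prod = y) :
    x * y ∈ A ⊓ B ∨ ∃ l, ReducedSeq A B l ∧ l.prod = x * y := by
  rcases hy with hy | ⟨l, hl, rfl⟩
  · by_cases hC : x * y ∈ A ⊓ B
    · exact .inl hC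
    · have hxy := (sameFactor_of_mem_inf hy hx).symm.mul_sameFactor_left
      exact .inr ⟨[x * y], reducedSeq_singleton.mpr (.of_sameFactor hxy hC), by simp⟩
  · rcases exists_reducedSeq_mul_prod hx hl with ⟨hC, -⟩ | ⟨l', hl', hprod, -⟩
    · exact .inl hC
    · exact .inr ⟨l', hl', hprod⟩

theorem IsAmalgam.mem_inf_or_exists_reducedSeq (hAB : IsAmalgam A B) (g : Γ) :
    g ∈ A ⊓ B ∨ ∃ l, ReducedSeq A B l ∧ l.prod = g := by
  have hg : g ∈ Subgroup.closure ((A : Set Γ) ∪ B) := by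
    rw [← Subgroup.sup_eq_closure, hAB.1]
    trivial
  induction hg using Subgroup.closure_induction_left with
  | one => exact .inl (one_mem _)
  | mul_left x hx y _ ih => exact mem_inf_or_exists_reducedSeq_mul hx ih
  | inv_mul_cancel x hx y _ ih =>
    exact mem_inf_or_exists_reducedSeq_mul (hx.imp inv_mem inv_mem) ih

theorem IsAmalgam.mul_prod_ne_one (hAB : IsAmalgam A B) {l : List Γ} (hx : x ∈ A ∨ x ∈ B)
    (hl : ReducedSeq A B l) (hlen : 2 ≤ l.length) : x * l.prod ≠ 1 := by
  rcases exists_reducedSeq_mul_prod hx hl with ⟨-, hle⟩ | ⟨l', hl', hprod, hle⟩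
  · omega
  · rw [← hprod]
    exact hAB.2 l' hl' (List.ne_nil_of_length_pos (by omega))

theorem IsAmalgam.mul_mem_inf_of_prod_mul_prod_eq_one (hAB : IsAmalgam A B) {u w : List Γ}
    (hu : ReducedSeq A B u) (hw : ReducedSeq A B w) (hx : u.getLast? = some x)
    (hy : w.head? = some y) (h : u.prod * w.prod = 1) : x * y ∈ A ⊓ B := by
  obtain ⟨u, rfl⟩ := List.getLast?_eq_some_iff.mp hx
  obtain ⟨w, rfl⟩ := List.head?_eq_some_iff.mp hy
  obtain ⟨hu', hx', hux⟩ := reducedSeq_append.mp hu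
  by_contra hC
  by_cases hxy : SameFactor A B x y
  · have hz : IsSyllable A B (x * y) := .of_sameFactor hxy.mul_sameFactor_left hC
    refine hAB.2 (u ++ x * y :: w) (reducedSeq_append.mpr ⟨hu', ?_, ?_⟩) (by simp) ?_
    · exact hw.cons_of_sameFactor hz hxy.mul_sameFactor_right
    · simp only [List.head?_cons, Option.mem_def, Option.some.injEq, forall_eq']
      exact fun a ha => (hux a ha x rfl).of_sameFactor_right hxy.mul_sameFactor_left hz
    · simpa [mul_assoc] using h
  · refine hAB.2 (u ++ [x] ++ y :: w) (reducedSeq_append.mpr ⟨hu, hw, ?_⟩) (by simp)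
      (by rwa [List.prod_append])
    simpa using not_sameFactor.mp hxy

theorem IsAmalgam.not_amCyclicallyReduced (hAB : IsAmalgam A B) {w : List Γ}
    (hw : ReducedSeq A B w) (hlen : 2 ≤ w.length) (hx : w.head? = some x)
    (hy : w.getLast? = some y) (hxy : SameFactor A B x y) :
    ¬AmCyclicallyReduced A B w.prod := by
  rintro (hfac | ⟨l, hl, hprod, -, a, b, ha, hb, hab⟩)
  · exact hAB.mul_prod_ne_one (hfac.imp inv_mem inv_mem) hw hlen (inv_mul_cancel _)
  have hax : a⁻¹ * x ∈ A ⊓ B :=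
    hAB.mul_mem_inf_of_prod_mul_prod_eq_one hl.invReverse hw (by simp [ha]) hx (by simp [hprod])
  have hyb : y * b⁻¹ ∈ A ⊓ B :=
    hAB.mul_mem_inf_of_prod_mul_prod_eq_one hw hl.invReverse hy (by simp [hb]) (by simp [hprod])
  rcases hxy with ⟨hxA, hyA⟩ | ⟨hxB, hyB⟩
  · exact hab.1 ⟨by simpa using (A.mul_mem_cancel_right hxA).mp hax.1,
      by simpa using (A.mul_mem_cancel_left hyA).mp hyb.1⟩
  · exact hab.2 ⟨by simpa using (B.mul_mem_cancel_right hxB).mp hax.2,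
      by simpa using (B.mul_mem_cancel_left hyB).mp hyb.2⟩

theorem IsAmalgam.not_amCyclicallyReduced_conj (hAB : IsAmalgam A B) {m : List Γ} {g : Γ}
    (hm : ReducedSeq A B m) (hx : m.getLast? = some x) (hg : IsSyllable A B g)
    (hxg : DiffFactors A B x g) : ¬AmCyclicallyReduced A B (m.prod * g * m.prod⁻¹) := by
  have hne : m ≠ [] := by
    rintro rfl
    simp at hx
  obtain ⟨d, hd⟩ : ∃ d, m.head? = some d := ⟨_, List.head?_eq_some_head hne⟩
  have hprod : (m ++ g :: m.invReverse).prod = m.prod * g * m.prod⁻¹ := by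
    simp [mul_assoc]
  rw [← hprod]
  refine hAB.not_amCyclicallyReduced (hm.append_cons_invReverse hx hg hxg) ?_
    (by simpa [List.head?_append_of_ne_nil _ hne]) (by simp [List.getLast?_cons, hd])
    (sameFactor_inv_right (hm.1 d (List.mem_of_mem_head? hd)).1)
  have := List.length_pos_iff.mpr hne
  simp only [List.length_append, List.length_cons]
  omega

def ConjInFactor (H : Subgroup Γ) (γ γ' : Γ) : Prop :=
  γ ∈ H ∧ γ' ∈ H ∧ ∃ h ∈ H, γ = h * γ' * h⁻¹

theorem ConjInFactor.of_mem {H : Subgroup Γ} {h γ' : Γ} (hh : h ∈ H) (hγ' : γ' ∈ H) :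
    ConjInFactor H (h * γ' * h⁻¹) γ' :=
  ⟨mul_mem (mul_mem hh hγ') (inv_mem hh), hγ', h, hh, rfl⟩

theorem ConjInFactor.trans {H : Subgroup Γ} {γ δ γ' : Γ} (h₁ : ConjInFactor H γ δ)
    (h₂ : ConjInFactor H δ γ') : ConjInFactor H γ γ' := by
  obtain ⟨hγ, -, a, ha, rfl⟩ := h₁
  obtain ⟨-, hγ', b, hb, rfl⟩ := h₂
  exact ⟨hγ, hγ', a * b, mul_mem ha hb, by group⟩

theorem SameFactor.conjInFactor_or {γ : Γ} (hxy : SameFactor A B x y)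
    (hC : x * y * x⁻¹ ∉ A ⊓ B)
    (h : ConjInFactor A γ (x * y * x⁻¹) ∨ ConjInFactor B γ (x * y * x⁻¹)) :
    ConjInFactor A γ y ∨ ConjInFactor B γ y := by
  rcases hxy with ⟨hxA, hyA⟩ | ⟨hxB, hyB⟩ <;> rcases h with hA | hB
  · exact .inl (hA.trans (.of_mem hxA hyA))
  · exact absurd ⟨(ConjInFactor.of_mem hxA hyA).1, hB.2.1⟩ hC
  · exact absurd ⟨hA.2.1, (ConjInFactor.of_mem hxB hyB).1⟩ hC
  · exact .inr (hB.trans (.of_mem hxB hyB))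

theorem IsAmalgam.conjInFactor_or_of_eq_conj_prod (hAB : IsAmalgam A B) {γ : Γ}
    (hcyc : AmCyclicallyReduced A B γ) (hnC : ∀ g : Γ, ∀ c ∈ A ⊓ B, γ ≠ g * c * g⁻¹)
    {m : List Γ} (hm : ReducedSeq A B m) {γ' : Γ} (hγ' : γ' ∈ A ∨ γ' ∈ B)
    (hconj : γ = m.prod * γ' * m.prod⁻¹) :
    ConjInFactor A γ γ' ∨ ConjInFactor B γ γ' := by
  induction m using List.reverseRecOn generalizing γ' with
  | nil =>
    simp only [List.prod_nil, one_mul, inv_one, mul_one] at hconj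
    subst hconj
    exact hγ'.imp (by simpa using ConjInFactor.of_mem (one_mem A) ·)
      (by simpa using ConjInFactor.of_mem (one_mem B) ·)
  | append_singleton m x ih =>
    obtain ⟨hm', -, -⟩ := reducedSeq_append.mp hm
    by_cases hxγ' : SameFactor A B x γ'
    · have hconj' : γ = m.prod * (x * γ' * x⁻¹) * m.prod⁻¹ := by
        rw [hconj, List.prod_append, List.prod_singleton]
        group
      refine hxγ'.conjInFactor_or (fun hC => hnC _ _ hC hconj') (ih hm' ?_ hconj')
      exact hxγ'.imp (fun ⟨hx, hγ'⟩ => (ConjInFactor.of_mem hx hγ').1)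
        (fun ⟨hx, hγ'⟩ => (ConjInFactor.of_mem hx hγ').1)
    · have hγ'C : γ' ∉ A ⊓ B := fun hC => hnC _ _ hC hconj
      exact absurd (hconj ▸ hcyc) (hAB.not_amCyclicallyReduced_conj hm List.getLast?_concat
        ⟨hγ', hγ'C⟩ (not_sameFactor.mp hxγ'))

end Amalgam

/-- Conjugation theorem in an amalgam, case (ii): if the cyclically reduced
element `γ` is conjugate to an element `γ'` of a factor, but is not conjugate
to any element of `C = A ⊓ B`, then `γ` and `γ'` lie in the same factor and are
conjugate by an element of that factor. -/
theorem amalgam_conj_in_factor (A B : Subgroup Γ) (hAB : IsAmalgam A B)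
    (γ γ' : Γ) (hcyc : AmCyclicallyReduced A B γ)
    (hfac : γ' ∈ A ∨ γ' ∈ B)
    (hconj : ∃ g : Γ, γ = g * γ' * g⁻¹)
    (hnC : ∀ g : Γ, ∀ c ∈ A ⊓ B, γ ≠ g * c * g⁻¹) :
    (γ ∈ A ∧ γ' ∈ A ∧ ∃ a ∈ A, γ = a * γ' * a⁻¹) ∨
    (γ ∈ B ∧ γ' ∈ B ∧ ∃ b ∈ B, γ = b * γ' * b⁻¹) := by
  obtain ⟨g, rfl⟩ := hconj
  rcases hAB.mem_inf_or_exists_reducedSeq g with hg | ⟨m, hm, rfl⟩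
  · exact hfac.imp (ConjInFactor.of_mem hg.1) (ConjInFactor.of_mem hg.2)
  · exact hAB.conjInFactor_or_of_eq_conj_prod hcyc hnC hm hfac rfl
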